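/- The map φ_X : HH^*(A,A) → HH^*(B,B) induced by an invertible bimodule complex X, defined by φ_X(f) = u[i] ∘ (Y ⊗^L_A f ⊗^L_A X) ∘ u^{−1} for f : A → A[i], is an isomorphism of graded k-algebras for the cup product (which corresponds to graded composition in the derived bimodule category). -/

import Mathlib

/-!
Viewing `f : a ⟶ a⟦i⟧` as a `ShiftedHom`, the cup product is `ShiftedHom.comp` and `φ` is the
action of `F` on shifted morphisms followed by conjugation with `u`. The action of `F` is
bijective because `F` is fully faithful and multiplicative because `F` commutes with the shift;
conjugation by an isomorphism is a bijection compatible with `ShiftedHom.comp` by naturality of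
`shiftFunctorAdd'`.
-/

open CategoryTheory

namespace CategoryTheory.ShiftedHom

variable {C D M : Type*} [Category C] [Category D] [AddMonoid M] [HasShift C M] [HasShift D M]

lemma map_bijective (F : C ⥤ D) [F.CommShift M] [F.Full] [F.Faithful] (X Y : C) (m : M) :
    Function.Bijective (fun f : ShiftedHom X Y m => f.map F) :=
  ((F.commShiftIso m).app Y).homToEquiv.bijective.comp
    ((Functor.FullyFaithful.ofFullyFaithful F).map_bijective _ _)

def conjEquiv {X Y X' Y' : C} (e₁ : X ≅ X') (e₂ : Y ≅ Y') (m : M) :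
    ShiftedHom X Y m ≃ ShiftedHom X' Y' m :=
  e₁.homCongr ((shiftFunctor C m).mapIso e₂)

lemma conjEquiv_apply {X Y X' Y' : C} (e₁ : X ≅ X') (e₂ : Y ≅ Y') {m : M}
    (f : ShiftedHom X Y m) : conjEquiv e₁ e₂ m f = e₁.inv ≫ f ≫ e₂.hom⟦m⟧' :=
  rfl

lemma conjEquiv_comp {X Y Z X' Y' Z' : C} (e₁ : X ≅ X') (e₂ : Y ≅ Y') (e₃ : Z ≅ Z')
    {a b c : M} (f : ShiftedHom X Y a) (g : ShiftedHom Y Z b) (h : b + a = c) :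
    conjEquiv e₁ e₃ c (f.comp g h) = (conjEquiv e₁ e₂ a f).comp (conjEquiv e₂ e₃ b g) h := by
  simp only [conjEquiv_apply, comp, Functor.map_comp, Category.assoc, Iso.map_hom_inv_id_assoc]
  rw [← Functor.comp_map (shiftFunctor C b) (shiftFunctor C a), NatTrans.naturality]

lemma comp_eq_shiftFunctorAdd_inv {X Y Z : C} {a b : M} (f : ShiftedHom X Y a)
    (g : ShiftedHom Y Z b) :
    f.comp g rfl = f ≫ g⟦a⟧' ≫ (shiftFunctorAdd C b a).inv.app Z := by
  rw [comp, shiftFunctorAdd'_eq_shiftFunctorAdd]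

end CategoryTheory.ShiftedHom

theorem derived_equivalence_induces_cup_product_isomorphism
    {C D : Type*} [Category C] [Category D] [HasShift C ℤ] [HasShift D ℤ]
    (F : C ⥤ D) [F.IsEquivalence] [F.CommShift ℤ] (a : C) (b : D)
    (u : F.obj a ≅ b) :
    (∀ i : ℤ, Function.Bijective
      (fun f : a ⟶ (shiftFunctor C i).obj a =>
        u.inv ≫ F.map f ≫ (F.commShiftIso i).hom.app a ≫ (shiftFunctor D i).map u.hom)) ∧
    (∀ (i j : ℤ) (f : a ⟶ (shiftFunctor C j).obj a) (g : a ⟶ (shiftFunctor C i).obj a),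
      (u.inv ≫ F.map (g ≫ (shiftFunctor C i).map f ≫ (shiftFunctorAdd C j i).inv.app a)
          ≫ (F.commShiftIso (j + i)).hom.app a ≫ (shiftFunctor D (j + i)).map u.hom)
        = (u.inv ≫ F.map g ≫ (F.commShiftIso i).hom.app a ≫ (shiftFunctor D i).map u.hom)
          ≫ (shiftFunctor D i).map
              (u.inv ≫ F.map f ≫ (F.commShiftIso j).hom.app a ≫ (shiftFunctor D j).map u.hom)
          ≫ (shiftFunctorAdd D j i).inv.app b) := by
  have hφ (i : ℤ) (f : ShiftedHom a a i) : ShiftedHom.conjEquiv u u i (f.map F) =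
      u.inv ≫ F.map f ≫ (F.commShiftIso i).hom.app a ≫ (shiftFunctor D i).map u.hom := by
    simp only [ShiftedHom.conjEquiv_apply, ShiftedHom.map, Category.assoc]
  refine ⟨fun i => ?_, fun i j f g => ?_⟩
  · rw [← funext (hφ i)]
    exact (ShiftedHom.conjEquiv u u i).bijective.comp (ShiftedHom.map_bijective F a a i)
  · have h := ShiftedHom.conjEquiv_comp u u u (ShiftedHom.map g F)
      (ShiftedHom.map f F) rfl
    rw [← ShiftedHom.map_comp] at h
    simpa only [← hφ, ShiftedHom.comp_eq_shiftFunctorAdd_inv] using h
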